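/- arXiv:0811.4309 — 2 statements merged into one kernel-verified Lean document; each statement's English description precedes it below -/
import Mathlib

section
/- Let A = A_q^a be a quantum complete intersection over a field k, and let φ : A → k be the k-linear functional sending an element of A to the coefficient of the monomial x_c^{a_c−1}⋯x_1^{a_1−1} with respect to the k-basis {x_c^{i_c}⋯x_1^{i_1} : 0 ≤ i_w ≤ a_w − 1}. Then the bilinear form A × A → k, (x, y) ↦ φ(xy), is nondegenerate; equivalently, the map A → Hom_k(A, k) sending a to the functional λ ↦ φ(λa) is an isomorphism of left A-modules, where Hom_k(A,k) carries the left A-module structure (b·f)(λ) = f(λb). In particular A is a Frobenius algebra. -/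
/-!
The generators q-commute with invertible scalars, so a product `x^f * x^g` of two ordered
monomials is a nonzero multiple of `x^(f+g)`, and `x^h = 0` as soon as some `h i ≥ a i`.
Hence `φ(x^e * x^(a-1-d))` and `φ(x^(a-1-d) * x^e)` are nonzero exactly when `e = d`: the
monomial basis is paired with the complementary monomials by a diagonal matrix with nonzero
diagonal, so `(x, y) ↦ φ(xy)` is nondegenerate on both sides. In finite dimension
`x ↦ φ(- * x)` is then an isomorphism onto the dual, and it is `A`-linear by associativity.
-/

noncomputable section

/-- The defining relations of the quantum complete intersection `A_q^a`:
`X_i ^ (a i) = 0` and `X_i * X_j = q i j • (X_j * X_i)`. -/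
def qciRel (k : Type) [Field k] (c : ℕ) (q : Fin c → Fin c → k) (a : Fin c → ℕ) :
    FreeAlgebra k (Fin c) → FreeAlgebra k (Fin c) → Prop := fun x y =>
  (∃ i, x = FreeAlgebra.ι k i ^ a i ∧ y = 0) ∨
  (∃ i j, x = FreeAlgebra.ι k i * FreeAlgebra.ι k j ∧
    y = q i j • (FreeAlgebra.ι k j * FreeAlgebra.ι k i))

/-- The quantum complete intersection `A_q^a = k⟨X_1,…,X_c⟩/(X_i^{a_i}, X_iX_j - q_{ij}X_jX_i)`. -/
abbrev QCI (k : Type) [Field k] (c : ℕ) (q : Fin c → Fin c → k) (a : Fin c → ℕ) : Type :=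
  RingQuot (qciRel k c q a)

/-- The generator `x_i` of `A_q^a` (the image of `X_i`). -/
def qciX (k : Type) [Field k] {c : ℕ} (q : Fin c → Fin c → k) (a : Fin c → ℕ) (i : Fin c) :
    QCI k c q a :=
  RingQuot.mkAlgHom k (qciRel k c q a) (FreeAlgebra.ι k i)

/-- The descending monomial `x_c^{d_c} ⋯ x_1^{d_1}` in `A_q^a`. -/
def qciDMono (k : Type) [Field k] {c : ℕ} (q : Fin c → Fin c → k) (a : Fin c → ℕ)
    (d : (i : Fin c) → Fin (a i)) : QCI k c q a :=
  (List.ofFn fun w : Fin c => qciX k q a w.rev ^ (d w.rev : ℕ)).prod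

namespace LinearMap

variable {R M N : Type*} [CommSemiring R] [NoZeroDivisors R] [AddCommMonoid M] [Module R M]
  [AddCommMonoid N] [Module R N]

theorem separatingLeft_of_basis_of_biorthogonal {ι : Type*} (b : Module.Basis ι R M)
    (B : M →ₗ[R] N →ₗ[R] R) (m : ι → N) (hm : ∀ d e, B (b e) (m d) ≠ 0 ↔ e = d) :
    B.SeparatingLeft := by
  classical
  intro x hx
  refine b.forall_coord_eq_zero_iff.mp fun d => ?_
  have hpair : B.flip (m d) = B (b d) (m d) • b.coord d := b.ext fun e => by
    by_cases hed : e = d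
    · subst hed; simp
    · simpa [Finsupp.single_apply, Ne.symm hed] using (hm d e).not.mpr hed
  have := hx (m d)
  rw [← flip_apply, hpair, smul_apply, smul_eq_mul] at this
  exact (mul_eq_zero.mp this).resolve_left ((hm d d).mpr rfl)

end LinearMap

section QCommuting

variable {R A ι : Type*} [CommSemiring R] [Semiring A] [Algebra R A] {q : ι → ι → R} {x : ι → A}

def orderedMonomial (x : ι → A) (L : List ι) (h : ι → ℕ) : A :=
  (L.map fun i => x i ^ h i).prod

@[simp]
theorem orderedMonomial_nil (h : ι → ℕ) : orderedMonomial x [] h = 1 := rfl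

@[simp]
theorem orderedMonomial_cons (j : ι) (L : List ι) (h : ι → ℕ) :
    orderedMonomial x (j :: L) h = x j ^ h j * orderedMonomial x L h := rfl

theorem pow_mul_pow_of_qcomm (hx : ∀ i j, x i * x j = q i j • (x j * x i)) (i j : ι) (m n : ℕ) :
    x i ^ m * x j ^ n = q i j ^ (m * n) • (x j ^ n * x i ^ m) := by
  have pow_right : ∀ n : ℕ, x i * x j ^ n = q i j ^ n • (x j ^ n * x i) := by
    intro n
    induction n with
    | zero => simp
    | succ n ih =>
      rw [pow_succ', ← mul_assoc, hx, smul_mul_assoc, mul_assoc, ih, mul_smul_comm, smul_smul,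
        pow_succ', ← mul_assoc]
  induction m with
  | zero => simp
  | succ m ih =>
    rw [pow_succ', mul_assoc, ih, mul_smul_comm, ← mul_assoc, pow_right, smul_mul_assoc,
      smul_smul, mul_assoc, ← pow_succ', ← pow_add, add_mul, one_mul]

theorem orderedMonomial_mul_pow (hx : ∀ i j, x i * x j = q i j • (x j * x i)) (L : List ι)
    (h : ι → ℕ) (i : ι) (n : ℕ) :
    orderedMonomial x L h * x i ^ n
      = (L.map fun j => q j i ^ (h j * n)).prod • (x i ^ n * orderedMonomial x L h) := by
  induction L with
  | nil => simp
  | cons j L ih =>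
    rw [orderedMonomial_cons, mul_assoc, ih, mul_smul_comm, ← mul_assoc,
      pow_mul_pow_of_qcomm hx, smul_mul_assoc, smul_smul, mul_assoc, List.map_cons,
      List.prod_cons, mul_comm]

theorem orderedMonomial_mul_orderedMonomial (hx : ∀ i j, x i * x j = q i j • (x j * x i))
    (hq : ∀ i j, IsUnit (q i j)) (L : List ι) (f g : ι → ℕ) :
    ∃ s : R, IsUnit s ∧ orderedMonomial x L f * orderedMonomial x L g
      = s • orderedMonomial x L (f + g) := by
  induction L with
  | nil => exact ⟨1, isUnit_one, by simp⟩
  | cons j L ih =>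
    obtain ⟨s, hs, hfg⟩ := ih
    refine ⟨(L.map fun i => q i j ^ (f i * g j)).prod * s,
      (List.prod_isUnit fun t ht => ?_).mul hs, ?_⟩
    · obtain ⟨i, -, rfl⟩ := List.mem_map.mp ht
      exact (hq i j).pow _
    · rw [orderedMonomial_cons, orderedMonomial_cons, mul_assoc, ← mul_assoc _ (x j ^ g j),
        orderedMonomial_mul_pow hx, smul_mul_assoc, mul_smul_comm, mul_assoc, hfg,
        mul_smul_comm, mul_smul_comm, smul_smul, ← mul_assoc, ← pow_add, orderedMonomial_cons,
        Pi.add_apply]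

theorem orderedMonomial_eq_zero {a : ι → ℕ} (ha : ∀ i, x i ^ a i = 0) {L : List ι}
    {h : ι → ℕ} {i : ι} (hiL : i ∈ L) (hi : a i ≤ h i) : orderedMonomial x L h = 0 :=
  List.prod_eq_zero <| List.mem_map.mpr
    ⟨i, hiL, by rw [← Nat.add_sub_cancel' hi, pow_add, ha, zero_mul]⟩

end QCommuting

section QuantumCompleteIntersection

variable {k : Type} [Field k] {c : ℕ} {q : Fin c → Fin c → k} {a : Fin c → ℕ}

theorem qciX_pow_eq_zero (i : Fin c) : qciX k q a i ^ a i = 0 := by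
  simpa [qciX] using RingQuot.mkAlgHom_rel k (s := qciRel k c q a) (Or.inl ⟨i, rfl, rfl⟩)

theorem qciX_mul_qciX (i j : Fin c) :
    qciX k q a i * qciX k q a j = q i j • (qciX k q a j * qciX k q a i) := by
  simpa [qciX] using RingQuot.mkAlgHom_rel k (s := qciRel k c q a) (Or.inr ⟨i, j, rfl, rfl⟩)

variable (q a) in
def qciMono (h : Fin c → ℕ) : QCI k c q a :=
  orderedMonomial (qciX k q a) ((List.finRange c).map Fin.rev) h

theorem qciDMono_eq_qciMono (d : (i : Fin c) → Fin (a i)) :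
    qciDMono k q a d = qciMono q a fun i => d i := by
  simp only [qciDMono, qciMono, orderedMonomial, List.ofFn_eq_map, List.map_map]
  rfl

theorem qciMono_eq_zero {h : Fin c → ℕ} {i : Fin c} (hi : a i ≤ h i) : qciMono q a h = 0 :=
  orderedMonomial_eq_zero qciX_pow_eq_zero (List.mem_map.mpr ⟨i.rev, List.mem_finRange _,
    i.rev_rev⟩) hi

theorem qciMono_mul_qciMono (hq : ∀ i j, IsUnit (q i j)) (f g : Fin c → ℕ) :
    ∃ s : k, IsUnit s ∧ qciMono q a f * qciMono q a g = s • qciMono q a (f + g) :=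
  orderedMonomial_mul_orderedMonomial qciX_mul_qciX hq _ f g

theorem coord_qciMono (b : Module.Basis ((i : Fin c) → Fin (a i)) k (QCI k c q a))
    (hb : ∀ d, b d = qciDMono k q a d) (top : (i : Fin c) → Fin (a i))
    (htop : ∀ i, (top i : ℕ) = a i - 1) (h : Fin c → ℕ) :
    b.coord top (qciMono q a h) = if h = fun i => a i - 1 then 1 else 0 := by
  classical
  by_cases hbig : ∃ i, a i ≤ h i
  · obtain ⟨i, hi⟩ := hbig
    have : h i ≠ a i - 1 := by have := (top i).isLt; omega
    rw [qciMono_eq_zero hi, map_zero, if_neg fun hh => this (congrFun hh i)]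
  · simp only [not_exists, not_le] at hbig
    have hh : qciMono q a h = b fun i => ⟨h i, hbig i⟩ := by rw [hb, qciDMono_eq_qciMono]
    rw [hh, b.coord_apply, b.repr_self, Finsupp.single_apply]
    congr 1
    simp only [funext_iff, Fin.ext_iff, htop, eq_comm]

theorem coord_qciMono_mul_qciMono_ne_zero_iff (hq : ∀ i j, IsUnit (q i j))
    (b : Module.Basis ((i : Fin c) → Fin (a i)) k (QCI k c q a))
    (hb : ∀ d, b d = qciDMono k q a d) (top : (i : Fin c) → Fin (a i))
    (htop : ∀ i, (top i : ℕ) = a i - 1) (f g : Fin c → ℕ) :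
    b.coord top (qciMono q a f * qciMono q a g) ≠ 0 ↔ ∀ i, f i + g i = a i - 1 := by
  obtain ⟨s, hs, hfg⟩ := qciMono_mul_qciMono hq f g
  rw [hfg, map_smul, coord_qciMono b hb top htop, smul_eq_mul]
  split_ifs with h
  · simpa [hs.ne_zero] using congrFun h
  · simpa [funext_iff] using h

theorem qci_pairing_nondegenerate (hq : ∀ i j, IsUnit (q i j))
    (b : Module.Basis ((i : Fin c) → Fin (a i)) k (QCI k c q a))
    (hb : ∀ d, b d = qciDMono k q a d) (top : (i : Fin c) → Fin (a i))
    (htop : ∀ i, (top i : ℕ) = a i - 1) :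
    ((LinearMap.mul k (QCI k c q a)).compr₂ (b.coord top)).Nondegenerate := by
  let dual (d : (i : Fin c) → Fin (a i)) : QCI k c q a := qciMono q a fun i => a i - 1 - d i
  have complement_iff (d e : (i : Fin c) → Fin (a i)) :
      (∀ i, (e i : ℕ) + (a i - 1 - d i) = a i - 1) ↔ e = d := by
    simp only [funext_iff, Fin.ext_iff]
    refine forall_congr' fun i => ?_
    have := (d i).isLt
    have := (e i).isLt
    omega
  refine ⟨LinearMap.separatingLeft_of_basis_of_biorthogonal b _ dual fun d e => ?_,
    LinearMap.flip_separatingLeft.mp <|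
      LinearMap.separatingLeft_of_basis_of_biorthogonal b _ dual fun d e => ?_⟩
  · simp only [LinearMap.compr₂_apply, LinearMap.mul_apply', hb, qciDMono_eq_qciMono, dual]
    rw [coord_qciMono_mul_qciMono_ne_zero_iff hq b hb top htop, complement_iff]
  · simp only [LinearMap.flip_apply, LinearMap.compr₂_apply, LinearMap.mul_apply', hb,
      qciDMono_eq_qciMono, dual]
    rw [coord_qciMono_mul_qciMono_ne_zero_iff hq b hb top htop, ← complement_iff]
    simp only [add_comm]

end QuantumCompleteIntersection

theorem qci_frobenius
    (k : Type) [Field k] (c : ℕ)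
    (q : Fin c → Fin c → k) (a : Fin c → ℕ)
    (hqc : ∀ i j, q i j * q j i = 1) (ha : ∀ i, 2 ≤ a i)
    -- the descending monomials form a k-basis of A
    (b : Module.Basis ((i : Fin c) → Fin (a i)) k (QCI k c q a))
    (hb : ∀ d, b d = qciDMono k q a d)
    -- φ is the coefficient of the socle monomial x_c^{a_c-1} ⋯ x_1^{a_1-1}
    (φ : QCI k c q a →ₗ[k] k)
    (hφ : φ = b.coord fun i => ⟨a i - 1, by have := ha i; omega⟩) :
    (∀ x : QCI k c q a, (∀ y : QCI k c q a, φ (x * y) = 0) → x = 0) ∧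
    (∀ y : QCI k c q a, (∀ x : QCI k c q a, φ (x * y) = 0) → y = 0) ∧
    ∃ e : QCI k c q a ≃ₗ[k] (QCI k c q a →ₗ[k] k),
      (∀ x l : QCI k c q a, e x l = φ (l * x)) ∧
      -- e is a morphism of left A-modules, where (b • f)(λ) = f(λb)
      (∀ x y l : QCI k c q a, e (x * y) l = e y (l * x)) := by
  have : FiniteDimensional k (QCI k c q a) := Module.Finite.of_basis b
  have hB : ((LinearMap.mul k (QCI k c q a)).compr₂ φ).Nondegenerate := by
    rw [hφ]
    exact qci_pairing_nondegenerate (fun i j => .of_mul_eq_one _ (hqc i j)) b hb _ fun _ => rfl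
  exact ⟨hB.1, hB.2, LinearMap.BilinForm.toDual _ (LinearMap.flip_nondegenerate.mpr hB),
    fun _ _ => rfl, fun x y l => congrArg φ (mul_assoc l x y).symm⟩
end
end

section
/- Let A_q^{a_c} be a quantum complete intersection over a field k, defined by the commutation matrix q and exponents a_c = (a_1, …, a_c). Set a_{2c} = (a_1, …, a_c, a_1, …, a_c) and let q′ be the 2c×2c block matrix [[q, qᵀ],[qᵀ, q]], where qᵀ is the transpose of q. Then q′ is a commutation matrix (q′_{uu} = 1 and q′_{uv}q′_{vu} = 1 for all u, v), and the quantum complete intersection A_{q′}^{a_{2c}} is a symmetric k-algebra. -/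
/-
The ordered monomials `x^e`, `e < a`, span `A_q^a`, and they are linearly independent because
the left regular representation can be realised on `(Fin n → ℕ) →₀ k`, with `single e 1`
standing for `x^e`. Let `φ` be the coefficient of the top monomial `x^(a - 1)`. As `x^e x^f`
is a unit multiple of `x^(e + f)`, the form `φ(xy)` pairs each basis monomial with exactly one
other, so it is nondegenerate. The products `x^e x^f` and `x^f x^e` differ by the factor
`∏_{u,w} q_{uw}^{e_u f_w}`, which for `e + f = a - 1` equals `∏_u (∏_w q_{uw}^{a_w - 1})^{e_u}`;
so `φ` is a trace once every row product `∏_w q_{uw}^{a_w - 1}` is `1`. Every row of `q'` holds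
`q_{ij}` and `q_{ji}` with the same exponent `a_j - 1`, so for the doubled data these products
are `1`.
-/

noncomputable section

/-- `A` is a symmetric `k`-algebra: there is a trace form `φ` with `φ(ab) = φ(ba)` whose
associated bilinear form `(a,b) ↦ φ(ab)` is nondegenerate. -/
def IsSymmAlg (k A : Type) [Field k] [Ring A] [Algebra k A] : Prop :=
  ∃ φ : A →ₗ[k] k, (∀ x y : A, φ (x * y) = φ (y * x)) ∧
    (∀ x : A, (∀ y : A, φ (x * y) = 0) → x = 0) ∧
    (∀ y : A, (∀ x : A, φ (x * y) = 0) → y = 0)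

/-- The `2c × 2c` block matrix `[[q, qᵀ], [qᵀ, q]]`. -/
def blockQ {k : Type} {c : ℕ} (q : Fin c → Fin c → k) : Fin (c + c) → Fin (c + c) → k :=
  fun u v =>
    Fin.addCases
      (fun i => Fin.addCases (fun j => q i j) (fun j => q j i) v)
      (fun i => Fin.addCases (fun j => q j i) (fun j => q i j) v) u

/-- The doubled exponent sequence `(a_1, …, a_c, a_1, …, a_c)`. -/
def blockA {c : ℕ} (a : Fin c → ℕ) : Fin (c + c) → ℕ :=
  fun u => Fin.addCases (fun i => a i) (fun i => a i) u

open Finset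

structure IsCommutationMatrix {ι M : Type*} [Monoid M] (q : ι → ι → M) : Prop where
  diag : ∀ i, q i i = 1
  mul_swap : ∀ i j, q i j * q j i = 1

section Bichar

variable {ι M : Type*} [Fintype ι] [CommMonoid M] (q : ι → ι → M)

def bichar (e f : ι → ℕ) : M := ∏ u, ∏ w, q u w ^ (e u * f w)

theorem bichar_add_right (e f g : ι → ℕ) :
    bichar q e (f + g) = bichar q e f * bichar q e g := by
  simp only [bichar, ← prod_mul_distrib, ← pow_add, Pi.add_apply, mul_add]

theorem bichar_eq_one {t : ι → ℕ} (ht : ∀ u, ∏ w, q u w ^ t w = 1) (e : ι → ℕ) :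
    bichar q e t = 1 := by
  simp only [bichar, mul_comm (e _), pow_mul, prod_pow, ht, one_pow, prod_const_one]

end Bichar

section Twist

variable {ι M : Type*} [CommMonoid M] (q : ι → ι → M) [LinearOrder ι] [LocallyFiniteOrderBot ι]

/-- The scalar produced by moving `x_u` to its place in the ordered monomial `x^f`. -/
def commCoeff (u : ι) (f : ι → ℕ) : M := ∏ w ∈ Iio u, q u w ^ f w

theorem commCoeff_congr {u : ι} {f g : ι → ℕ} (h : ∀ w < u, f w = g w) :
    commCoeff q u f = commCoeff q u g :=
  prod_congr rfl fun w hw => by rw [h w (mem_Iio.1 hw)]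

theorem commCoeff_add_single [DecidableEq ι] (u v : ι) (m : ℕ) (f : ι → ℕ) :
    commCoeff q u (f + Pi.single v m) = commCoeff q u f * if v < u then q u v ^ m else 1 := by
  simp only [commCoeff, Pi.add_apply, pow_add, prod_mul_distrib, Pi.single_apply, pow_ite,
    pow_zero, prod_ite_eq', mem_Iio]

variable [Fintype ι]

theorem prod_prod_Iio_mul_prod_prod_Iio_swap (F : ι → ι → M) (hF : ∀ u, F u u = 1) :
    (∏ u, ∏ w ∈ Iio u, F u w) * ∏ u, ∏ w ∈ Iio u, F w u = ∏ u, ∏ w, F u w := by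
  simp only [← filter_gt_eq_Iio, prod_filter]
  rw [prod_comm (f := fun u w => if w < u then F w u else 1), ← prod_mul_distrib]
  refine prod_congr rfl fun u _ => ?_
  rw [← prod_mul_distrib]
  refine prod_congr rfl fun w _ => ?_
  rcases lt_trichotomy w u with h | rfl | h
  · simp [h, h.not_gt]
  · simp [hF]
  · simp [h, h.not_gt]

/-- `x^e * x^f = twist q e f • x^(e + f)`. -/
def twist (e f : ι → ℕ) : M := ∏ u, commCoeff q u f ^ e u

theorem twist_zero_right (e : ι → ℕ) : twist q e 0 = 1 := by
  simp [twist, commCoeff]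

theorem isUnit_twist (hq : ∀ u v, q u v * q v u = 1) (e f : ι → ℕ) : IsUnit (twist q e f) :=
  IsUnit.prod_univ_iff.2 fun u =>
    (IsUnit.prod_iff.2 fun w _ => (IsUnit.of_mul_eq_one _ (hq u w)).pow _).pow _

theorem twist_eq_prod (e f : ι → ℕ) :
    twist q e f = ∏ u, ∏ w ∈ Iio u, q u w ^ (e u * f w) := by
  simp only [twist, commCoeff, ← prod_pow, ← pow_mul, mul_comm]

theorem twist_mul_twist_swap (hq : ∀ u, q u u = 1) (e f : ι → ℕ) :
    twist q e f * twist (Function.swap q) f e = bichar q e f := by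
  rw [twist_eq_prod, twist_eq_prod, bichar,
    ← prod_prod_Iio_mul_prod_prod_Iio_swap _ (by simp [hq])]
  simp only [Function.swap, mul_comm (f _)]

theorem twist_mul_twist_swap_eq_one (hq : ∀ u v, q u v * q v u = 1) (e f : ι → ℕ) :
    twist q e f * twist (Function.swap q) e f = 1 := by
  rw [twist_eq_prod, twist_eq_prod, ← prod_mul_distrib]
  refine prod_eq_one fun u _ => ?_
  rw [← prod_mul_distrib]
  exact prod_eq_one fun w _ => by rw [Function.swap, ← mul_pow, hq, one_pow]

theorem bichar_self (hq : IsCommutationMatrix q) (e : ι → ℕ) : bichar q e e = 1 := by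
  rw [← twist_mul_twist_swap q hq.diag, twist_mul_twist_swap_eq_one q hq.mul_swap]

theorem twist_comm (hq : IsCommutationMatrix q) {t : ι → ℕ} (ht : ∀ u, ∏ w, q u w ^ t w = 1)
    {e f : ι → ℕ} (hef : e + f = t) : twist q e f = twist q f e := by
  have hb : bichar q e f = 1 := by
    have h := bichar_add_right q e f e
    rwa [add_comm f, hef, bichar_eq_one q ht, bichar_self q hq, mul_one, eq_comm] at h
  calc twist q e f
      = twist q e f * (twist q f e * twist (Function.swap q) f e) := by
        rw [twist_mul_twist_swap_eq_one q hq.mul_swap, mul_one]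
    _ = twist q f e * (twist q e f * twist (Function.swap q) f e) := mul_left_comm _ _ _
    _ = twist q f e := by rw [twist_mul_twist_swap q hq.diag, hb, mul_one]

end Twist

namespace QCI

variable {k : Type} [Field k] {n : ℕ} (q : Fin n → Fin n → k) (a : Fin n → ℕ)

def gen (u : Fin n) : QCI k n q a :=
  RingQuot.mkAlgHom k (qciRel k n q a) (FreeAlgebra.ι k u)

theorem gen_pow_self (u : Fin n) : gen q a u ^ a u = 0 := by
  simpa [gen] using RingQuot.mkAlgHom_rel k (s := qciRel k n q a) (Or.inl ⟨u, rfl, rfl⟩ :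
    qciRel k n q a (FreeAlgebra.ι k u ^ a u) 0)

theorem gen_mul_gen (u v : Fin n) :
    gen q a u * gen q a v = q u v • (gen q a v * gen q a u) := by
  simpa [gen] using RingQuot.mkAlgHom_rel k (s := qciRel k n q a) (Or.inr ⟨u, v, rfl, rfl⟩ :
    qciRel k n q a (FreeAlgebra.ι k u * FreeAlgebra.ι k v)
      (q u v • (FreeAlgebra.ι k v * FreeAlgebra.ι k u)))

theorem gen_mul_gen_pow (u v : Fin n) (m : ℕ) :
    gen q a u * gen q a v ^ m = q u v ^ m • (gen q a v ^ m * gen q a u) := by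
  induction m with
  | zero => simp
  | succ m ih =>
    rw [pow_succ', ← mul_assoc, gen_mul_gen, smul_mul_assoc, mul_assoc, ih, mul_smul_comm,
      smul_smul, pow_succ', mul_assoc]

def listMonomial (l : List (Fin n)) (e : Fin n → ℕ) : QCI k n q a :=
  (l.map fun u => gen q a u ^ e u).prod

def monomial (e : Fin n → ℕ) : QCI k n q a := listMonomial q a (List.finRange n) e

theorem listMonomial_cons (v : Fin n) (l : List (Fin n)) (e : Fin n → ℕ) :
    listMonomial q a (v :: l) e = gen q a v ^ e v * listMonomial q a l e := by
  rw [listMonomial, List.map_cons, List.prod_cons, listMonomial]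

theorem listMonomial_congr {l : List (Fin n)} {e e' : Fin n → ℕ} (h : ∀ w ∈ l, e w = e' w) :
    listMonomial q a l e = listMonomial q a l e' := by
  rw [listMonomial, listMonomial, List.map_congr_left fun u hu => by rw [h u hu]]

theorem listMonomial_eq_zero {l : List (Fin n)} {e : Fin n → ℕ} {u : Fin n} (hu : u ∈ l)
    (he : a u ≤ e u) : listMonomial q a l e = 0 := by
  induction l with
  | nil => simp at hu
  | cons v l ih =>
    rw [listMonomial_cons]
    rcases List.mem_cons.1 hu with rfl | hu
    · rw [← Nat.add_sub_cancel' he, pow_add, gen_pow_self, zero_mul, zero_mul]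
    · rw [ih hu, mul_zero]

theorem monomial_zero : monomial q a 0 = 1 := by
  simp [monomial, listMonomial]

theorem gen_mul_listMonomial {l : List (Fin n)} (hl : l.Pairwise (· < ·)) {u : Fin n}
    (hu : u ∈ l) (e : Fin n → ℕ) :
    ∃ c : k, gen q a u * listMonomial q a l e = c • listMonomial q a l (e + Pi.single u 1) := by
  induction l with
  | nil => simp at hu
  | cons v l ih =>
    obtain ⟨hvl, hl⟩ := List.pairwise_cons.1 hl
    rw [listMonomial_cons, listMonomial_cons]
    rcases List.mem_cons.1 hu with rfl | hu
    · have hl : listMonomial q a l e = listMonomial q a l (e + Pi.single u 1) :=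
        listMonomial_congr q a fun w hw => by simp [Pi.single_eq_of_ne (hvl w hw).ne']
      refine ⟨1, ?_⟩
      rw [one_smul, ← mul_assoc, ← pow_succ', hl]
      simp
    · obtain ⟨c, hc⟩ := ih hl hu
      refine ⟨q u v ^ e v * c, ?_⟩
      rw [← mul_assoc, gen_mul_gen_pow, smul_mul_assoc, mul_assoc, hc, mul_smul_comm,
        smul_smul, Pi.add_apply, Pi.single_eq_of_ne (hvl u hu).ne, add_zero]

theorem gen_mul_monomial (u : Fin n) (e : Fin n → ℕ) :
    ∃ c : k, gen q a u * monomial q a e = c • monomial q a (e + Pi.single u 1) :=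
  gen_mul_listMonomial q a (List.pairwise_lt_finRange n) (List.mem_finRange u) e

theorem monomial_eq_zero {e : Fin n → ℕ} {u : Fin n} (he : a u ≤ e u) : monomial q a e = 0 :=
  listMonomial_eq_zero q a (List.mem_finRange u) he

abbrev Exponent (a : Fin n → ℕ) : Type := (u : Fin n) → Fin (a u)

def basisMonomial (e : Exponent a) : QCI k n q a := monomial q a fun u => e u

theorem gen_mul_basisMonomial_mem_span (u : Fin n) (e : Exponent a) :
    gen q a u * basisMonomial q a e ∈ Submodule.span k (Set.range (basisMonomial q a)) := by
  obtain ⟨c, hc⟩ := gen_mul_monomial q a u fun w => e w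
  rw [basisMonomial, hc]
  refine Submodule.smul_mem _ c ?_
  by_cases h : (e u : ℕ) + 1 < a u
  · refine Submodule.subset_span ⟨Function.update e u ⟨e u + 1, h⟩, ?_⟩
    rw [basisMonomial]
    congr 1
    funext w
    by_cases hw : w = u
    · subst hw; simp
    · simp [Function.update_of_ne hw, Pi.single_eq_of_ne hw]
  · rw [monomial_eq_zero q a (u := u) (by simpa using h)]
    exact Submodule.zero_mem _

theorem span_basisMonomial (ha : ∀ u, 0 < a u) :
    Submodule.span k (Set.range (basisMonomial q a)) = ⊤ := by
  set S := Submodule.span k (Set.range (basisMonomial q a))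
  have hgen : ∀ u, ∀ s ∈ S, gen q a u * s ∈ S := fun u s hs => by
    induction hs using Submodule.span_induction with
    | mem x hx =>
      obtain ⟨e, rfl⟩ := hx
      exact gen_mul_basisMonomial_mem_span q a u e
    | zero => simp
    | add x y _ _ hx hy => simpa [mul_add] using S.add_mem hx hy
    | smul c x _ hx => simpa [mul_smul_comm] using S.smul_mem c hx
  have hone : (1 : QCI k n q a) ∈ S := by
    rw [← monomial_zero]
    exact Submodule.subset_span ⟨fun u => ⟨0, ha u⟩, rfl⟩
  refine Submodule.eq_top_iff'.2 fun z => ?_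
  obtain ⟨z, rfl⟩ := RingQuot.mkAlgHom_surjective k (qciRel k n q a) z
  suffices ∀ s ∈ S, RingQuot.mkAlgHom k (qciRel k n q a) z * s ∈ S by simpa using this 1 hone
  induction z using FreeAlgebra.induction with
  | grade0 r => simpa [Algebra.algebraMap_eq_smul_one] using fun s hs => S.smul_mem r hs
  | grade1 u => exact hgen u
  | mul x y hx hy => exact fun s hs => by simpa [mul_assoc] using hx _ (hy s hs)
  | add x y hx hy => exact fun s hs => by simpa [add_mul] using S.add_mem (hx s hs) (hy s hs)

def genOp (u : Fin n) : Module.End k ((Fin n → ℕ) →₀ k) :=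
  Finsupp.lsum k fun f => LinearMap.toSpanSingleton k _
    (if f u + 1 < a u then Finsupp.single (f + Pi.single u 1) (commCoeff q u f) else 0)

theorem genOp_single (u : Fin n) (f : Fin n → ℕ) (c : k) :
    genOp q a u (Finsupp.single f c) =
      if f u + 1 < a u then Finsupp.single (f + Pi.single u 1) (c * commCoeff q u f) else 0 := by
  split_ifs <;> simp [genOp, *]

theorem genOp_pow_single (u : Fin n) {f : Fin n → ℕ} (hf : f u < a u) (m : ℕ) (c : k) :
    (genOp q a u ^ m) (Finsupp.single f c) =
      if f u + m < a u then Finsupp.single (f + Pi.single u m) (c * commCoeff q u f ^ m)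
      else 0 := by
  induction m generalizing f c with
  | zero => simp [hf]
  | succ m ih =>
    rw [pow_succ, Module.End.mul_apply, genOp_single]
    split_ifs with h1 h2 h2
    · rw [ih (by simpa using h1), if_pos (by simp; omega), commCoeff_add_single, if_neg
        (lt_irrefl u), mul_one, add_assoc, ← Pi.single_add, add_comm 1 m, mul_assoc,
        ← pow_succ']
    · rw [ih (by simpa using h1), if_neg (by simp; omega)]
    · omega
    · rw [map_zero]

theorem genOp_pow_self {u : Fin n} (ha : 0 < a u) : genOp q a u ^ a u = 0 := by
  refine Finsupp.lhom_ext fun f c => ?_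
  obtain ⟨m, hm⟩ := Nat.exists_eq_add_of_lt ha
  rw [hm, pow_succ, Module.End.mul_apply, genOp_single]
  split_ifs with h
  · rw [genOp_pow_single q a u (by simpa using h), if_neg (by simp; omega)]
    rfl
  · simp

theorem genOp_mul_genOp (hq : IsCommutationMatrix q) (u v : Fin n) :
    genOp q a u * genOp q a v = q u v • (genOp q a v * genOp q a u) := by
  rcases eq_or_ne u v with rfl | huv
  · rw [hq.diag, one_smul]
  refine Finsupp.lhom_ext fun f c => ?_
  have hu : (f + Pi.single v 1 : Fin n → ℕ) u = f u := by simp [Pi.single_eq_of_ne huv]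
  have hv : (f + Pi.single u 1 : Fin n → ℕ) v = f v := by simp [Pi.single_eq_of_ne huv.symm]
  by_cases hfu : f u + 1 < a u <;> by_cases hfv : f v + 1 < a v <;>
    simp only [Module.End.mul_apply, LinearMap.smul_apply, genOp_single, hu, hv, hfu, hfv,
      if_true, if_false, map_zero, smul_zero, Finsupp.smul_single]
  rw [add_right_comm, commCoeff_add_single, commCoeff_add_single, smul_eq_mul]
  congr 1
  rcases huv.lt_or_gt with h | h
  · rw [if_neg h.not_gt, if_pos h, pow_one]
    linear_combination (-(c * commCoeff q u f * commCoeff q v f)) * hq.mul_swap u v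
  · rw [if_pos h, if_neg h.not_gt, pow_one]
    ring

variable {q a}

def regularRep (hq : IsCommutationMatrix q) (ha : ∀ u, 0 < a u) :
    QCI k n q a →ₐ[k] Module.End k ((Fin n → ℕ) →₀ k) :=
  RingQuot.liftAlgHom k ⟨FreeAlgebra.lift k (genOp q a), by
    rintro _ _ (⟨u, rfl, rfl⟩ | ⟨u, v, rfl, rfl⟩)
    · simp [genOp_pow_self q a (ha u)]
    · simpa using genOp_mul_genOp q a hq u v⟩

variable (hq : IsCommutationMatrix q) (ha : ∀ u, 0 < a u)

theorem regularRep_gen (u : Fin n) : regularRep hq ha (gen q a u) = genOp q a u := by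
  simp [regularRep, gen]

theorem regularRep_listMonomial_single {l : List (Fin n)} (hl : l.Pairwise (· < ·)) (e : Fin n → ℕ)
    {f : Fin n → ℕ} (hf : ∀ u, f u < a u) :
    regularRep hq ha (listMonomial q a l e) (Finsupp.single f 1) =
      if ∀ u ∈ l, f u + e u < a u then
        Finsupp.single (f + fun w => if w ∈ l then e w else 0)
          (l.map fun u => commCoeff q u f ^ e u).prod
      else 0 := by
  induction l with
  | nil => simp [listMonomial, Pi.add_def]
  | cons v l ih =>
    obtain ⟨hvl, hl⟩ := List.pairwise_cons.1 hl
    rw [listMonomial_cons, map_mul, map_pow, regularRep_gen, Module.End.mul_apply, ih hl]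
    by_cases hcond : ∀ u ∈ l, f u + e u < a u
    · have hv : v ∉ l := fun h => lt_irrefl v (hvl v h)
      have hfv : (f + fun w => if w ∈ l then e w else 0) v = f v := by simp [hv]
      rw [if_pos hcond, genOp_pow_single q a v (by rw [hfv]; exact hf v), hfv]
      by_cases hev : f v + e v < a v
      · rw [if_pos hev,
          if_pos ((List.forall_mem_cons (p := fun u => f u + e u < a u)).2 ⟨hev, hcond⟩),
          commCoeff_congr q (g := f) fun w hw => by
          simp only [Pi.add_apply, if_neg fun h => (hvl w h).not_gt hw, add_zero]]
        congr 1
        · funext w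
          by_cases hw : w = v
          · subst hw; simp [hv]
          · simp [hw]
        · simp [mul_comm]
      · rw [if_neg hev, if_neg fun h => hev (h v List.mem_cons_self)]
    · rw [if_neg hcond, map_zero, if_neg fun h => hcond fun u hu => h u (List.mem_cons_of_mem v hu)]

theorem regularRep_monomial_single (e : Fin n → ℕ) {f : Fin n → ℕ} (hf : ∀ u, f u < a u) :
    regularRep hq ha (monomial q a e) (Finsupp.single f 1) =
      if ∀ u, f u + e u < a u then Finsupp.single (f + e) (twist q e f) else 0 := by
  rw [monomial, regularRep_listMonomial_single hq ha (List.pairwise_lt_finRange n) e hf]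
  simp [twist, List.mem_finRange, ← Fin.prod_univ_def]

/-- The coefficient of the top monomial `x^(a - 1)` in the normal form. -/
def traceForm : QCI k n q a →ₗ[k] k :=
  Finsupp.lapply (fun u => a u - 1) ∘ₗ LinearMap.applyₗ (Finsupp.single 0 1) ∘ₗ
    (regularRep hq ha).toLinearMap

theorem regularRep_basisMonomial_single_zero (e : Exponent a) :
    regularRep hq ha (basisMonomial q a e) (Finsupp.single 0 1) =
      Finsupp.single (fun u => (e u : ℕ)) (1 : k) := by
  rw [basisMonomial, regularRep_monomial_single hq ha _ (f := 0) ha, if_pos fun u => by simp,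
    zero_add, twist_zero_right]

theorem traceForm_basisMonomial_mul (e f : Exponent a) :
    traceForm hq ha (basisMonomial q a e * basisMonomial q a f) =
      if ∀ u, f u = (e u).rev then twist q (fun u => e u) (fun u => f u) else 0 := by
  have hf : ∀ u, (f u : ℕ) < a u := fun u => (f u).isLt
  rw [traceForm, LinearMap.comp_apply, LinearMap.comp_apply, AlgHom.toLinearMap_apply,
    LinearMap.applyₗ_apply_apply, map_mul, Module.End.mul_apply,
    regularRep_basisMonomial_single_zero,
    basisMonomial, regularRep_monomial_single hq ha _ hf, Finsupp.lapply_apply]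
  have hrev : ∀ u, (f u : ℕ) + e u = a u - 1 ↔ f u = (e u).rev := fun u => by
    rw [Fin.ext_iff, Fin.val_rev]; omega
  by_cases h : ∀ u, f u = (e u).rev
  · rw [if_pos fun u => by have := (hrev u).2 (h u); have := (e u).isLt; omega, if_pos h]
    convert Finsupp.single_eq_same
    exact ((hrev _).2 (h _)).symm
  · rw [if_neg h]
    split_ifs
    · exact Finsupp.single_eq_of_ne fun he => h fun u => (hrev u).1 (congrFun he u).symm
    · rfl

theorem traceForm_basisMonomial_mul_comm (hkey : ∀ u, ∏ w, q u w ^ (a w - 1) = 1)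
    (e f : Exponent a) :
    traceForm hq ha (basisMonomial q a e * basisMonomial q a f) =
      traceForm hq ha (basisMonomial q a f * basisMonomial q a e) := by
  rw [traceForm_basisMonomial_mul, traceForm_basisMonomial_mul]
  have hiff : (∀ u, f u = (e u).rev) ↔ ∀ u, e u = (f u).rev :=
    forall_congr' fun u => by rw [eq_comm, Fin.rev_eq_iff]
  by_cases h : ∀ u, f u = (e u).rev
  · rw [if_pos h, if_pos (hiff.1 h)]
    refine twist_comm q hq hkey (funext fun u => ?_)
    have := congrArg Fin.val (h u)
    have := (e u).isLt
    simp only [Fin.val_rev, Pi.add_apply] at *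
    omega
  · rw [if_neg h, if_neg (hiff.not.1 h)]

theorem traceForm_mul_comm (hkey : ∀ u, ∏ w, q u w ^ (a w - 1) = 1) (x y : QCI k n q a) :
    traceForm hq ha (x * y) = traceForm hq ha (y * x) := by
  let B := (LinearMap.mul k (QCI k n q a)).compr₂ (traceForm hq ha)
  have hB : B = B.flip :=
    LinearMap.ext_on_range (span_basisMonomial q a ha) fun e =>
      LinearMap.ext_on_range (span_basisMonomial q a ha) fun f =>
        traceForm_basisMonomial_mul_comm hq ha hkey e f
  exact LinearMap.congr_fun₂ hB x y

theorem eq_zero_of_traceForm_mul_eq_zero {x : QCI k n q a}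
    (hx : ∀ y, traceForm hq ha (x * y) = 0) : x = 0 := by
  obtain ⟨c, rfl⟩ := (Submodule.mem_span_range_iff_exists_fun k).1
    (span_basisMonomial q a ha ▸ Submodule.mem_top : x ∈ _)
  suffices c = 0 by simp [this]
  funext e₀
  have h := hx (basisMonomial q a fun u => (e₀ u).rev)
  simp only [Finset.sum_mul, map_sum, smul_mul_assoc, map_smul, traceForm_basisMonomial_mul,
    Fin.rev_inj, smul_eq_mul] at h
  rwa [Finset.sum_eq_single e₀ (fun e _ he => by rw [if_neg fun h => he (funext h).symm, mul_zero])
    (by simp), if_pos fun _ => rfl, mul_eq_zero,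
    or_iff_left (isUnit_twist q hq.mul_swap _ _).ne_zero] at h

end QCI

theorem QCI.isSymmAlg {k : Type} [Field k] {n : ℕ} {q : Fin n → Fin n → k} {a : Fin n → ℕ}
    (hq : IsCommutationMatrix q) (ha : ∀ u, 0 < a u)
    (hkey : ∀ u, ∏ w, q u w ^ (a w - 1) = 1) : IsSymmAlg k (QCI k n q a) :=
  ⟨QCI.traceForm hq ha, QCI.traceForm_mul_comm hq ha hkey,
    fun _ => QCI.eq_zero_of_traceForm_mul_eq_zero hq ha,
    fun y hy => QCI.eq_zero_of_traceForm_mul_eq_zero hq ha fun x => by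
      rw [QCI.traceForm_mul_comm hq ha hkey, hy]⟩

section Block

variable {M : Type} [CommMonoid M] {c : ℕ} {q : Fin c → Fin c → M}

theorem IsCommutationMatrix.blockQ (hq : IsCommutationMatrix q) :
    IsCommutationMatrix (blockQ q) where
  diag u := by
    cases u using Fin.addCases <;> simp only [_root_.blockQ, Fin.addCases_left,
      Fin.addCases_right, hq.diag]
  mul_swap u v := by
    cases u using Fin.addCases <;> cases v using Fin.addCases <;>
      simp only [_root_.blockQ, Fin.addCases_left, Fin.addCases_right, hq.mul_swap]

theorem prod_blockQ_pow_blockA (hq : ∀ i j, q i j * q j i = 1) (b : Fin c → ℕ) (u : Fin (c + c)) :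
    ∏ w, blockQ q u w ^ blockA b w = 1 := by
  cases u using Fin.addCases <;>
    simp only [Fin.prod_univ_add, blockQ, blockA, Fin.addCases_left, Fin.addCases_right,
      ← Finset.prod_mul_distrib, ← mul_pow, hq, one_pow, Finset.prod_const_one]

end Block

theorem doubled_qci_is_symmetric_general
    (k : Type) [Field k] (c : ℕ)
    (q : Fin c → Fin c → k) (a : Fin c → ℕ)
    (hqd : ∀ i, q i i = 1) (hqc : ∀ i j, q i j * q j i = 1) (ha : ∀ i, 2 ≤ a i) :
    (∀ u, blockQ q u u = 1) ∧ (∀ u v, blockQ q u v * blockQ q v u = 1) ∧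
    IsSymmAlg k (QCI k (c + c) (blockQ q) (blockA a)) := by
  have hQ : IsCommutationMatrix (blockQ q) := IsCommutationMatrix.blockQ ⟨hqd, hqc⟩
  have hpos : ∀ u, 0 < blockA a u := fun u => by
    cases u using Fin.addCases <;>
      simp only [blockA, Fin.addCases_left, Fin.addCases_right] <;> exact two_pos.trans_le (ha _)
  have hkey : ∀ u, ∏ w, blockQ q u w ^ (blockA a w - 1) = 1 := fun u => by
    have hsub : ∀ w, blockA a w - 1 = blockA (fun i => a i - 1) w := fun w => by
      cases w using Fin.addCases <;> simp only [blockA, Fin.addCases_left, Fin.addCases_right]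
    simpa only [hsub] using prod_blockQ_pow_blockA hqc _ u
  exact ⟨hQ.diag, hQ.mul_swap, QCI.isSymmAlg hQ hpos hkey⟩

theorem doubled_qci_is_symmetric
    (k : Type) [Field k] (c : ℕ) (hc : 1 ≤ c)
    (q : Fin c → Fin c → k) (a : Fin c → ℕ)
    (hqd : ∀ i, q i i = 1) (hqc : ∀ i j, q i j * q j i = 1) (ha : ∀ i, 2 ≤ a i) :
    (∀ u, blockQ q u u = 1) ∧ (∀ u v, blockQ q u v * blockQ q v u = 1) ∧
    IsSymmAlg k (QCI k (c + c) (blockQ q) (blockA a)) :=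
  doubled_qci_is_symmetric_general k c q a hqd hqc ha
end
end
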